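/- arXiv:1902.07693 — 7 statements merged into one kernel-verified Lean document; each statement's English description precedes it below -/
import Mathlib

section
/- For every positive integer t there exists a finite set S ⊆ ℕ × ℕ with |S| = t such that |π₁(S)| + |π₂(S)| + |{a + b : (a, b) ∈ S}| ≤ t + 3, where π₁(S) and π₂(S) denote the images of S under the two coordinate projections. -/
/-- A `(t+3, t)`-configuration in the addition table of an initial segment of
the integers: `t` cells spanning at most `t + 3` rows, columns and labels. -/
theorem stmt_7 :
    ∀ t : ℕ, 0 < t →
    ∃ S : Finset (ℕ × ℕ), S.card = t ∧
      (S.image Prod.fst).card + (S.image Prod.snd).card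
        + (S.image fun ab => ab.1 + ab.2).card ≤ t + 3 := by
  intro t ht
  set a := (t + 1) / 2 with ha
  set b := t / 2 with hb
  set S : Finset (ℕ × ℕ) :=
    ({0} ×ˢ Finset.range a) ∪ ({1} ×ˢ Finset.range b) with hS
  have hmem : ∀ p : ℕ × ℕ, p ∈ S ↔
      (p.1 = 0 ∧ p.2 < a) ∨ (p.1 = 1 ∧ p.2 < b) := by
    rintro ⟨x, y⟩
    simp only [hS, Finset.mem_union, Finset.mem_product, Finset.mem_singleton,
      Finset.mem_range]
  refine ⟨S, ?_, ?_⟩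
  · have hdisj : Disjoint ({0} ×ˢ Finset.range a) ({1} ×ˢ Finset.range b) := by
      rw [Finset.disjoint_left]
      rintro ⟨x, y⟩ hp hp'
      simp [Finset.mem_product] at hp hp'
      omega
    rw [hS, Finset.card_union_of_disjoint hdisj]
    simp [Finset.card_product]
    omega
  · have h1 : S.image Prod.fst ⊆ {0, 1} := by
      intro x hx
      rw [Finset.mem_image] at hx
      obtain ⟨p, hp, rfl⟩ := hx
      rw [hmem] at hp
      simp
      omega
    have h2 : S.image Prod.snd ⊆ Finset.range a := by
      intro x hx
      rw [Finset.mem_image] at hx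
      obtain ⟨p, hp, rfl⟩ := hx
      rw [hmem] at hp
      rw [Finset.mem_range]
      omega
    have h3 : S.image (fun ab => ab.1 + ab.2) ⊆ Finset.range (b + 1) := by
      intro x hx
      rw [Finset.mem_image] at hx
      obtain ⟨p, hp, rfl⟩ := hx
      rw [hmem] at hp
      rw [Finset.mem_range]
      omega
    have c1 := Finset.card_le_card h1
    have c2 := Finset.card_le_card h2
    have c3 := Finset.card_le_card h3
    simp [Finset.card_range] at c1 c2 c3
    have : ({0, 1} : Finset ℕ).card = 2 := by decide
    omega
end

section
/- For every prime p and every positive integer t there exist a positive integer m and a finite set S ⊆ (ℤ/pℤ)^m × (ℤ/pℤ)^m with |S| = t such that |π₁(S)| + |π₂(S)| + |{x + y : (x, y) ∈ S}| ≤ t + 3, where π₁(S) and π₂(S) denote the images of S under the two coordinate projections. -/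
/-!
Use two rows `0` and `u ≠ 0` and a set `C` of columns that is closed under `· + u` up to one
element `x ∉ C`. The cells `(0, c)` and `(u, c)` for `c ∈ C`, together with `(0, x)` when `t` is
odd, are `t` cells in two rows, `⌈t/2⌉` columns and with all labels in `C ∪ {x}`, a set of size
`⌊t/2⌋ + 1`. Such a `C` of any size below `|G|` is built greedily, always adding the element of
`C + u` that is not in `C`, if there is one.
-/

open Finset

namespace Finset

variable {α : Type*} [Fintype α] [DecidableEq α]

theorem exists_notMem_insert_subset_insert {C : Finset α} (hC : #C < Fintype.card α) (z : α) :
    ∃ y ∉ C, insert z C ⊆ insert y C := by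
  by_cases hz : z ∈ C
  · obtain ⟨y, -, hy⟩ := exists_mem_notMem_of_card_lt_card (s := C) (t := univ) (by rwa [card_univ])
    exact ⟨y, hy, (insert_eq_of_mem hz).subset.trans (subset_insert y C)⟩
  · exact ⟨z, hz, subset_rfl⟩

theorem exists_card_eq_image_subset_insert (f : α → α) {n : ℕ} (hn : n < Fintype.card α) :
    ∃ C : Finset α, ∃ x ∉ C, #C = n ∧ C.image f ⊆ insert x C := by
  induction n with
  | zero =>
    obtain ⟨x⟩ := Fintype.card_pos_iff.mp hn
    exact ⟨∅, x, notMem_empty x, card_empty, by simp⟩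
  | succ n ih =>
    obtain ⟨C, x, hx, rfl, hC⟩ := ih (by omega)
    obtain ⟨y, hy, hxy⟩ := exists_notMem_insert_subset_insert
      (C := insert x C) (by rwa [card_insert_of_notMem hx]) (f x)
    refine ⟨insert x C, y, hy, card_insert_of_notMem hx, ?_⟩
    calc (insert x C).image f = insert (f x) (C.image f) := image_insert f x C
      _ ⊆ insert (f x) (insert x C) := insert_subset_insert _ hC
      _ ⊆ insert y (insert x C) := hxy

end Finset

section AdditionTable

variable {G : Type*} [AddZeroClass G] [DecidableEq G]

def vertexCount (S : Finset (G × G)) : ℕ :=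
  #(S.image Prod.fst) + #(S.image Prod.snd) + #(S.image fun xy => xy.1 + xy.2)

def twoRows (u : G) (B C : Finset G) : Finset (G × G) :=
  {0} ×ˢ B ∪ {u} ×ˢ C

theorem card_twoRows {u : G} (hu : u ≠ 0) (B C : Finset G) :
    #(twoRows u B C) = #B + #C := by
  rw [twoRows, card_union_of_disjoint (disjoint_product.mpr (.inl (by simpa using hu.symm))),
    card_product, card_product, card_singleton, card_singleton, one_mul, one_mul]

theorem vertexCount_twoRows_le {u x : G} {B C : Finset G} (hCB : C ⊆ B) (hBx : B ⊆ insert x C)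
    (hC : C.image (u + ·) ⊆ insert x C) :
    vertexCount (twoRows u B C) ≤ #B + #C + 3 := by
  have rows : (twoRows u B C).image Prod.fst ⊆ {0, u} := by
    simp only [twoRows, image_union]
    exact union_subset_union subset_product_image_fst subset_product_image_fst
  have cols : (twoRows u B C).image Prod.snd ⊆ B := by
    simp only [twoRows, image_union]
    exact union_subset subset_product_image_snd (subset_product_image_snd.trans hCB)
  have labels : (twoRows u B C).image (fun xy => xy.1 + xy.2) ⊆ insert x C := by
    intro z hz
    simp only [twoRows, mem_image, mem_union, mem_product, mem_singleton] at hz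
    obtain ⟨⟨a, b⟩, ⟨rfl, hb⟩ | ⟨rfl, hb⟩, rfl⟩ := hz
    · simpa using hBx hb
    · exact hC (mem_image_of_mem _ hb)
  calc vertexCount (twoRows u B C) ≤ #{0, u} + #B + #(insert x C) :=
        add_le_add (add_le_add (card_le_card rows) (card_le_card cols)) (card_le_card labels)
    _ ≤ 2 + #B + (#C + 1) := by gcongr <;> [exact card_le_two; exact card_insert_le x C]
    _ = #B + #C + 3 := by ring

end AdditionTable

/-- A `(t+3, t)`-configuration in the addition table of `(ℤ/pℤ)^m` for some
`m`: `t` cells spanning at most `t + 3` rows, columns and labels. -/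
theorem stmt_8 :
    ∀ p : ℕ, p.Prime → ∀ t : ℕ, 0 < t →
    ∃ m : ℕ, 0 < m ∧
      ∃ S : Finset ((Fin m → ZMod p) × (Fin m → ZMod p)), S.card = t ∧
        (S.image Prod.fst).card + (S.image Prod.snd).card
          + (S.image fun xy => xy.1 + xy.2).card ≤ t + 3 := by
  intro p hp t ht
  have : Fact p.Prime := ⟨hp⟩
  set u : Fin t → ZMod p := Pi.single ⟨0, ht⟩ 1
  have hu : u ≠ 0 := by simp [u]
  have hcard : t / 2 < Fintype.card (Fin t → ZMod p) := by
    simpa using (Nat.lt_pow_self hp.one_lt (n := t)).trans_le' (Nat.div_le_self t 2)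
  obtain ⟨C, x, hx, hCt, hC⟩ := exists_card_eq_image_subset_insert (u + ·) hcard
  refine ⟨t, ht, ?_⟩
  rcases Nat.even_or_odd' t with ⟨k, rfl | rfl⟩
  · refine ⟨twoRows u C C, by rw [card_twoRows hu]; omega, ?_⟩
    exact (vertexCount_twoRows_le subset_rfl (subset_insert x C) hC).trans (by omega)
  · refine ⟨twoRows u (insert x C) C, by rw [card_twoRows hu, card_insert_of_notMem hx]; omega, ?_⟩
    exact (vertexCount_twoRows_le (subset_insert x C) subset_rfl hC).trans
      (by rw [card_insert_of_notMem hx]; omega)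
end

section
/- For every real δ > 0 there exists v₀ such that for every integer v ≥ v₀ there exists a finite set S ⊆ ℕ × ℕ with |π₁(S)| + |π₂(S)| + |{a + b : (a, b) ∈ S}| ≤ v and |S| ≥ (1 − δ)·v²/12, where π₁(S) and π₂(S) denote the images of S under the two coordinate projections. -/
def mySet (t : ℕ) : Finset (ℕ × ℕ) :=
  (Finset.range (2*t)).biUnion
    (fun a => (Finset.Ico (t-a) (min (2*t) (3*t-a))).image (fun b => (a,b)))

lemma mySet_mem {t : ℕ} {p : ℕ × ℕ} (hp : p ∈ mySet t) :
    p.1 < 2*t ∧ p.2 < 2*t ∧ t ≤ p.1 + p.2 ∧ p.1 + p.2 < 3*t := by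
  simp only [mySet, Finset.mem_biUnion, Finset.mem_image, Finset.mem_range,
    Finset.mem_Ico] at hp
  obtain ⟨a, ha, b, hb, rfl⟩ := hp
  simp only
  omega

lemma mySet_card (t : ℕ) : (mySet t).card = 3 * t^2 := by
  rw [mySet, Finset.card_biUnion]
  · have h1 : ∀ a ∈ Finset.range (2*t),
        ((Finset.Ico (t-a) (min (2*t) (3*t-a))).image (fun b => (a,b))).card
          = min (2*t) (3*t-a) - (t-a) := by
      intro a _
      rw [Finset.card_image_of_injective _ (fun x y h => by simpa using h),
        Nat.card_Ico]
    rw [Finset.sum_congr rfl h1]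
    rw [show 2*t = t + t from by ring, Finset.sum_range_add]
    rw [← Finset.sum_add_distrib]
    have h2 : ∀ a ∈ Finset.range t,
        (min (t+t) (3*t-a) - (t-a)) + (min (t+t) (3*t-(t+a)) - (t-(t+a))) = 3*t := by
      intro a ha
      simp only [Finset.mem_range] at ha
      omega
    rw [Finset.sum_congr rfl h2, Finset.sum_const, Finset.card_range, smul_eq_mul]
    ring
  · intro a _ a' _ hne
    simp only [Finset.disjoint_left, Finset.mem_image]
    rintro p ⟨b, _, rfl⟩ ⟨b', _, h⟩
    exact hne (by simpa using (Prod.mk.injEq _ _ _ _ ▸ h).1.symm)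

/-- In the addition table of an initial segment of the integers, `v` vertices
can span at least `(1 + o(1))·v²/12` faces. -/
theorem stmt_11 :
    ∀ δ : ℝ, 0 < δ →
    ∃ v₀ : ℕ, ∀ v : ℕ, v₀ ≤ v →
      ∃ S : Finset (ℕ × ℕ),
        (S.image Prod.fst).card + (S.image Prod.snd).card
          + (S.image fun ab => ab.1 + ab.2).card ≤ v ∧
        (1 - δ) * (v : ℝ) ^ 2 / 12 ≤ (S.card : ℝ) := by
  intro δ hδ
  refine ⟨⌈10/δ⌉₊ + 6, fun v hv => ?_⟩
  set t := v / 6 with ht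
  refine ⟨mySet t, ?_, ?_⟩
  · have hfst : (mySet t).image Prod.fst ⊆ Finset.range (2*t) := by
      intro x hx
      simp only [Finset.mem_image] at hx
      obtain ⟨p, hp, rfl⟩ := hx
      exact Finset.mem_range.mpr (mySet_mem hp).1
    have hsnd : (mySet t).image Prod.snd ⊆ Finset.range (2*t) := by
      intro x hx
      simp only [Finset.mem_image] at hx
      obtain ⟨p, hp, rfl⟩ := hx
      exact Finset.mem_range.mpr (mySet_mem hp).2.1
    have hsum : ((mySet t).image fun ab => ab.1 + ab.2) ⊆ Finset.Ico t (3*t) := by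
      intro x hx
      simp only [Finset.mem_image] at hx
      obtain ⟨p, hp, rfl⟩ := hx
      exact Finset.mem_Ico.mpr ⟨(mySet_mem hp).2.2.1, (mySet_mem hp).2.2.2⟩
    have c1 := Finset.card_le_card hfst
    have c2 := Finset.card_le_card hsnd
    have c3 := Finset.card_le_card hsum
    simp only [Finset.card_range, Nat.card_Ico] at c1 c2 c3
    omega
  · rw [mySet_card]
    have h1 : (v : ℝ) - 5 ≤ 6 * (t : ℝ) := by
      have : v ≤ 6 * t + 5 := by omega
      have := (Nat.cast_le (α := ℝ)).mpr this
      push_cast at this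
      linarith
    have h2 : (10 : ℝ) ≤ δ * v := by
      have hc : (⌈10/δ⌉₊ : ℝ) ≤ v := by
        exact_mod_cast (Nat.cast_le (α := ℝ)).mpr (le_trans (Nat.le_add_right _ 6) hv)
      have := Nat.le_ceil (10/δ)
      have h10 : 10/δ ≤ (v:ℝ) := le_trans this hc
      rw [div_le_iff₀ hδ] at h10
      linarith
    have h3 : (6 : ℝ) ≤ v := by
      exact_mod_cast (Nat.cast_le (α := ℝ)).mpr (le_trans (Nat.le_add_left _ _) hv)
    have ht0 : (0:ℝ) ≤ (t:ℝ) := Nat.cast_nonneg _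
    push_cast
    rw [div_le_iff₀ (by norm_num : (0:ℝ) < 12)]
    nlinarith [sq_nonneg ((v:ℝ) - 5), sq_nonneg (6 * (t:ℝ) - (v - 5)), mul_nonneg hδ.le (sq_nonneg ((v:ℝ)))]
end

section
/- For every real δ > 0 there exists t₀ such that for every integer t ≥ t₀ there exists a finite set S ⊆ ℕ × ℕ with |S| = t and |π₁(S)| + |π₂(S)| + |{a + b : (a, b) ∈ S}| ≤ (√12 + δ)·√t, where π₁(S) and π₂(S) denote the images of S under the two coordinate projections. -/
/-- The hexagonal region in the `2n × 2n` grid with sums in `[n, 3n)`. -/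
def hexRegion (n : ℕ) : Finset (ℕ × ℕ) :=
  (Finset.range (2 * n)).biUnion fun a =>
    (Finset.Ico (n - a) (min (2 * n) (3 * n - a))).image fun b => (a, b)

lemma mem_hexRegion {n : ℕ} {p : ℕ × ℕ} (h : p ∈ hexRegion n) :
    p.1 < 2 * n ∧ p.2 < 2 * n ∧ n ≤ p.1 + p.2 ∧ p.1 + p.2 < 3 * n := by
  simp only [hexRegion, Finset.mem_biUnion, Finset.mem_image, Finset.mem_Ico,
    Finset.mem_range] at h
  obtain ⟨a, ha, b, ⟨hb1, hb2⟩, rfl⟩ := h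
  simp only
  omega

lemma hexRegion_card (n : ℕ) : (hexRegion n).card = 3 * (n * n) := by
  rw [hexRegion, Finset.card_biUnion]
  · have hterm : ∀ a : ℕ,
        ((Finset.Ico (n - a) (min (2 * n) (3 * n - a))).image fun b => (a, b)).card
          = min (2 * n) (3 * n - a) - (n - a) := by
      intro a
      rw [Finset.card_image_of_injective _ (fun x y h => by simpa using h), Nat.card_Ico]
    simp only [hterm]
    rw [show 2 * n = n + n by ring, Finset.sum_range_add]
    rw [← Finset.sum_add_distrib]
    have : ∀ a ∈ Finset.range n,
        (min (n + n) (3 * n - a) - (n - a)) + (min (n + n) (3 * n - (n + a)) - (n - (n + a)))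
          = 3 * n := by
      intro a ha
      rw [Finset.mem_range] at ha
      omega
    rw [Finset.sum_congr rfl this, Finset.sum_const, Finset.card_range, smul_eq_mul]
    ring
  · intro a _ b _ hab
    simp only [Finset.disjoint_left, Finset.mem_image, Finset.mem_Ico]
    rintro p ⟨x, _, rfl⟩ ⟨y, _, h⟩
    exact hab (congrArg Prod.fst h).symm

/-- In the addition table of an initial segment of the integers one can find
`t` cells spanning at most `(√12 + o(1))·√t` vertices. -/
theorem stmt_12 :
    ∀ δ : ℝ, 0 < δ →
    ∃ t₀ : ℕ, ∀ t : ℕ, t₀ ≤ t →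
      ∃ S : Finset (ℕ × ℕ), S.card = t ∧
        (((S.image Prod.fst).card + (S.image Prod.snd).card
          + (S.image fun ab => ab.1 + ab.2).card : ℕ) : ℝ) ≤
            (Real.sqrt 12 + δ) * Real.sqrt t := by
  intro δ hδ
  refine ⟨max 3 ⌈(6 / δ) ^ 2⌉₊, fun t ht => ?_⟩
  have ht3 : 3 ≤ t := le_trans (le_max_left _ _) ht
  have htδ : (6 / δ) ^ 2 ≤ (t : ℝ) := by
    have := le_trans (le_max_right 3 _) ht
    exact le_trans (Nat.le_ceil _) (by exact_mod_cast this)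
  -- choose minimal n with t ≤ 3 n²
  have hex_ex : ∃ n : ℕ, t ≤ 3 * (n * n) := ⟨t, by nlinarith⟩
  set n := Nat.find hex_ex with hn
  have hn_le : t ≤ 3 * (n * n) := Nat.find_spec hex_ex
  have hn_pos : 1 ≤ n := by
    rcases Nat.eq_zero_or_pos n with h | h
    · exfalso; have := hn_le; rw [h] at this; omega
    · exact h
  have hn_min : ¬ t ≤ 3 * ((n - 1) * (n - 1)) := Nat.find_min hex_ex (by omega)
  push_neg at hn_min
  -- pick a subset of the hexagon of size exactly t
  obtain ⟨S, hS_sub, hS_card⟩ := Finset.exists_subset_card_eq (hexRegion_card n ▸ hn_le)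
  refine ⟨S, hS_card, ?_⟩
  -- vertex counts
  have hfst : (S.image Prod.fst).card ≤ 2 * n := by
    calc (S.image Prod.fst).card ≤ (Finset.range (2 * n)).card := by
          apply Finset.card_le_card
          intro a ha
          rw [Finset.mem_image] at ha
          obtain ⟨p, hp, rfl⟩ := ha
          exact Finset.mem_range.mpr (mem_hexRegion (hS_sub hp)).1
      _ = 2 * n := Finset.card_range _
  have hsnd : (S.image Prod.snd).card ≤ 2 * n := by
    calc (S.image Prod.snd).card ≤ (Finset.range (2 * n)).card := by
          apply Finset.card_le_card
          intro a ha
          rw [Finset.mem_image] at ha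
          obtain ⟨p, hp, rfl⟩ := ha
          exact Finset.mem_range.mpr (mem_hexRegion (hS_sub hp)).2.1
      _ = 2 * n := Finset.card_range _
  have hsum : (S.image fun ab => ab.1 + ab.2).card ≤ 2 * n := by
    calc (S.image fun ab => ab.1 + ab.2).card ≤ (Finset.Ico n (3 * n)).card := by
          apply Finset.card_le_card
          intro a ha
          rw [Finset.mem_image] at ha
          obtain ⟨p, hp, rfl⟩ := ha
          have := mem_hexRegion (hS_sub hp)
          exact Finset.mem_Ico.mpr ⟨this.2.2.1, this.2.2.2⟩
      _ = 2 * n := by rw [Nat.card_Ico]; omega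
  have htotal : ((S.image Prod.fst).card + (S.image Prod.snd).card
      + (S.image fun ab => ab.1 + ab.2).card : ℕ) ≤ 6 * n := by omega
  -- real estimates
  have ht_pos : (0:ℝ) < t := by positivity
  have hsqrt_t : (0:ℝ) < Real.sqrt t := Real.sqrt_pos.mpr ht_pos
  have h6 : (6:ℝ) ≤ δ * Real.sqrt t := by
    have h1 : 6 / δ ≤ Real.sqrt t := by
      rw [show (6:ℝ)/δ = Real.sqrt ((6/δ)^2) from (Real.sqrt_sq (by positivity)).symm]
      exact Real.sqrt_le_sqrt htδ
    calc (6:ℝ) = δ * (6 / δ) := by field_simp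
      _ ≤ δ * Real.sqrt t := by nlinarith
  have hmin_real : 3 * ((n:ℝ) - 1) ^ 2 < t := by
    have : ((3 * ((n - 1) * (n - 1)) : ℕ) : ℝ) < (t : ℝ) := by exact_mod_cast hn_min
    have hcast : ((n - 1 : ℕ) : ℝ) = (n : ℝ) - 1 := by
      rw [Nat.cast_sub hn_pos]; simp
    push_cast [hcast] at this
    nlinarith
  have h6n : (6 : ℝ) * n ≤ Real.sqrt 12 * Real.sqrt t + 6 := by
    have hsq : (6 * ((n:ℝ) - 1)) ^ 2 < 12 * t := by nlinarith
    have h1 : 6 * ((n:ℝ) - 1) < Real.sqrt (12 * t) := by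
      have hnn : (0:ℝ) ≤ 6 * ((n:ℝ) - 1) := by
        have : (1:ℝ) ≤ n := by exact_mod_cast hn_pos
        linarith
      nlinarith [Real.sq_sqrt (by positivity : (0:ℝ) ≤ 12 * t),
        Real.sqrt_nonneg (12 * (t:ℝ))]
    have h2 : Real.sqrt (12 * t) = Real.sqrt 12 * Real.sqrt t :=
      Real.sqrt_mul (by norm_num) _
    linarith [h1, h2 ▸ h1]
  calc (((S.image Prod.fst).card + (S.image Prod.snd).card
      + (S.image fun ab => ab.1 + ab.2).card : ℕ) : ℝ)
      ≤ (6 : ℝ) * n := by exact_mod_cast htotal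
    _ ≤ Real.sqrt 12 * Real.sqrt t + 6 := h6n
    _ ≤ Real.sqrt 12 * Real.sqrt t + δ * Real.sqrt t := by linarith
    _ = (Real.sqrt 12 + δ) * Real.sqrt t := by ring
end

section
/- Let p be a prime and let l ≥ 0, 1 ≤ a ≤ p and m ≥ l + 1 be integers. Then there exists a set S ⊆ (ℤ/pℤ)^m × (ℤ/pℤ)^m with |S| = a²·p^{2l}, |π₁(S)| = a·p^l, |π₂(S)| = a·p^l, and |{x + y : (x, y) ∈ S}| ≤ (2a − 1)·p^l, where π₁(S) and π₂(S) denote the images of S under the two coordinate projections. -/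
open Pointwise


/-- The block construction in the addition table of `(ℤ/pℤ)^m`: an `a × a`
grid of `p^l × p^l` blocks gives `a²·p^{2l}` faces on `a·p^l` rows, `a·p^l`
columns, and at most `(2a − 1)·p^l` labels. -/
theorem stmt_13 :
    ∀ p : ℕ, p.Prime → ∀ l a m : ℕ, 1 ≤ a → a ≤ p → l + 1 ≤ m →
    ∃ S : Finset ((Fin m → ZMod p) × (Fin m → ZMod p)),
      S.card = a ^ 2 * p ^ (2 * l) ∧
      (S.image Prod.fst).card = a * p ^ l ∧
      (S.image Prod.snd).card = a * p ^ l ∧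
      (S.image fun xy => xy.1 + xy.2).card ≤ (2 * a - 1) * p ^ l := by
  intro p hp l a m ha hap hlm
  haveI : Fact p.Prime := ⟨hp⟩
  -- the embedding of ZMod p × (Fin l → ZMod p) into Fin m → ZMod p
  set φ : ZMod p × (Fin l → ZMod p) → (Fin m → ZMod p) :=
    fun cv i => if h0 : (i : ℕ) = 0 then cv.1
      else if hl : (i : ℕ) ≤ l then cv.2 ⟨(i : ℕ) - 1, by omega⟩ else 0 with hφ
  have hadd : ∀ x y, φ (x + y) = φ x + φ y := by
    intro x y; funext i
    simp only [hφ, Pi.add_apply, Prod.fst_add, Prod.snd_add]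
    split_ifs <;> simp
  have hinj : Function.Injective φ := by
    intro x y hxy
    have h0 : x.1 = y.1 := by
      have := congrFun hxy ⟨0, by omega⟩
      simpa [hφ] using this
    have h2 : x.2 = y.2 := by
      funext j
      have := congrFun hxy ⟨(j : ℕ) + 1, by omega⟩
      have hjl : (j : ℕ) + 1 ≤ l := j.isLt
      simp only [hφ] at this
      rw [dif_neg (by omega), dif_pos hjl, dif_neg (by omega), dif_pos hjl] at this
      simpa using this
    exact Prod.ext h0 h2
  -- the interval of first coordinates
  set I : Finset (ZMod p) := (Finset.range a).image (fun n : ℕ => (n : ZMod p)) with hI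
  have hcastinj : ∀ {b : ℕ}, b ≤ p → Set.InjOn (fun n : ℕ => (n : ZMod p)) (Finset.range b) := by
    intro b hb x hx y hy h
    simp only [Finset.coe_range, Set.mem_Iio] at hx hy
    have := congrArg ZMod.val h
    rwa [ZMod.val_natCast_of_lt (by omega), ZMod.val_natCast_of_lt (by omega)] at this
  have hIcard : I.card = a := by
    rw [hI, Finset.card_image_of_injOn (hcastinj hap), Finset.card_range]
  have hIsum : I + I ⊆ (Finset.range (2 * a - 1)).image (fun n : ℕ => (n : ZMod p)) := by
    intro z hz
    rw [Finset.mem_add] at hz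
    obtain ⟨x, hx, y, hy, rfl⟩ := hz
    simp only [hI, Finset.mem_image, Finset.mem_range] at hx hy ⊢
    obtain ⟨n, hn, rfl⟩ := hx
    obtain ⟨k, hk, rfl⟩ := hy
    exact ⟨n + k, by omega, by push_cast; ring⟩
  have hIsumcard : (I + I).card ≤ 2 * a - 1 := by
    calc (I + I).card ≤ ((Finset.range (2 * a - 1)).image (fun n : ℕ => (n : ZMod p))).card :=
          Finset.card_le_card hIsum
      _ ≤ 2 * a - 1 := (Finset.card_image_le).trans (by simp)
  -- the row/column set
  have hpl : (Finset.univ : Finset (Fin l → ZMod p)).card = p ^ l := by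
    simp [ZMod.card]
  set A : Finset (Fin m → ZMod p) := (I ×ˢ (Finset.univ : Finset (Fin l → ZMod p))).image φ
    with hA
  have hAcard : A.card = a * p ^ l := by
    rw [hA, Finset.card_image_of_injective _ hinj, Finset.card_product, hIcard, hpl]
  have hAne : A.Nonempty := by
    rw [← Finset.card_pos, hAcard]
    exact Nat.mul_pos ha (pow_pos hp.pos l)
  refine ⟨A ×ˢ A, ?_, ?_, ?_, ?_⟩
  · rw [Finset.card_product, hAcard]; ring
  · rw [Finset.product_image_fst hAne, hAcard]
  · rw [Finset.product_image_snd hAne, hAcard]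
  · rw [Finset.image_add_product]
    have hsub : A + A ⊆ ((I + I) ×ˢ (Finset.univ : Finset (Fin l → ZMod p))).image φ := by
      intro z hz
      rw [Finset.mem_add] at hz
      obtain ⟨x, hx, y, hy, rfl⟩ := hz
      rw [hA, Finset.mem_image] at hx hy
      obtain ⟨u, hu, rfl⟩ := hx
      obtain ⟨v, hv, rfl⟩ := hy
      rw [Finset.mem_product] at hu hv
      refine Finset.mem_image.2 ⟨u + v, ?_, hadd u v⟩
      rw [Finset.mem_product]
      exact ⟨Finset.add_mem_add hu.1 hv.1, Finset.mem_univ _⟩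
    calc ((A + A)).card ≤ (((I + I) ×ˢ (Finset.univ : Finset (Fin l → ZMod p))).image φ).card :=
          Finset.card_le_card hsub
      _ ≤ (I + I).card * p ^ l := by
          rw [Finset.card_image_of_injective _ hinj, Finset.card_product, hpl]
      _ ≤ (2 * a - 1) * p ^ l := Nat.mul_le_mul_right _ hIsumcard
end

section
/- For every real δ > 0 there exists v₀ such that for every prime p and every integer v ≥ v₀ there exist a positive integer m and a finite set S ⊆ (ℤ/pℤ)^m × (ℤ/pℤ)^m with |π₁(S)| + |π₂(S)| + |{x + y : (x, y) ∈ S}| ≤ v and |S| ≥ (1 − δ)·v²/49, where π₁(S) and π₂(S) denote the images of S under the two coordinate projections. -/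
/-!
In `(ℤ/pℤ)^(k+1)` the slab `A` of vectors whose first coordinate is one of `0, …, t` has
`(t + 1) p^k` elements, and as long as `2t + 1 ≤ p` no carry wraps around, so `A + A` lies in the
slab of width `2t + 1`. A square `F × F` with `F ⊆ A`, `|F| = a`, therefore has `a²` cells and
at most `2a + (2t + 1) p^k` vertices. The numbers `p^k (t + 1)` with `2t + 1 ≤ p` grow by a factor
of at most `2` from one to the next, so one of them lies in `[a, 2a]`, and then the square has at
most `6a` vertices: `v` vertices span about `v²/36 ≥ v²/49` faces.
-/

open Finset
open scoped Pointwise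

lemma exists_pow_mul_succ_le_two_mul {p a : ℕ} (hp : 1 < p) (ha : 0 < a) :
    ∃ k t, 2 * t + 1 ≤ p ∧ a ≤ p ^ k * (t + 1) ∧ p ^ k * (t + 1) ≤ 2 * a := by
  obtain ⟨k, hPa, haP⟩ : ∃ k, p ^ k ≤ a ∧ a < p ^ k * p :=
    ⟨Nat.log p a, Nat.pow_log_le_self p ha.ne', Nat.lt_pow_succ_log_self hp a⟩
  have hP0 : 0 < p ^ k := by positivity
  have hqa : p ^ k * (a / p ^ k) ≤ a := Nat.mul_div_le a _
  have hlt : a < p ^ k * (a / p ^ k + 1) := Nat.lt_mul_div_succ a hP0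
  by_cases hq : 2 * (a / p ^ k) + 1 ≤ p
  · refine ⟨k, a / p ^ k, hq, hlt.le, ?_⟩
    rw [mul_add_one]
    omega
  · refine ⟨k + 1, 0, by omega, by rw [pow_succ]; omega, ?_⟩
    have : p ^ k * p ≤ p ^ k * (2 * (a / p ^ k)) := Nat.mul_le_mul_left _ (by omega)
    rw [mul_left_comm] at this
    rw [pow_succ]
    omega

section Slab

variable (p : ℕ) [NeZero p]

def slab (k s : ℕ) : Finset (Fin (k + 1) → ZMod p) :=
  Fintype.piFinset (Fin.cons ((range s).image Nat.cast) fun _ => univ)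

variable {p}

lemma card_slab {k s : ℕ} (hs : s ≤ p) : #(slab p k s) = s * p ^ k := by
  have hinj : Set.InjOn (Nat.cast : ℕ → ZMod p) (range s) := by
    intro i hi j hj hij
    simp only [coe_range, Set.mem_Iio] at hi hj
    simpa [ZMod.val_cast_of_lt (hi.trans_le hs), ZMod.val_cast_of_lt (hj.trans_le hs)]
      using congrArg ZMod.val hij
  simp [slab, Fintype.card_piFinset, Fin.prod_univ_succ, card_image_of_injOn hinj]

lemma slab_add_slab_subset (k s t : ℕ) :
    slab p k (s + 1) + slab p k (t + 1) ⊆ slab p k (s + t + 1) := by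
  have hrange : range (s + 1) + range (t + 1) ⊆ range (s + t + 1) := by
    intro n hn
    obtain ⟨i, hi, j, hj, rfl⟩ := mem_add.mp hn
    simp only [mem_range] at hi hj ⊢
    omega
  rw [slab, slab, ← Fintype.piFinset_add]
  refine Fintype.piFinset_subset _ _ fun i => ?_
  cases i using Fin.cases with
  | zero =>
    simp only [Fin.cons_zero]
    have hcast :=
      image_add (Nat.castAddMonoidHom (ZMod p)) (s := range (s + 1)) (t := range (t + 1))
    rw [Nat.coe_castAddMonoidHom] at hcast
    exact hcast ▸ image_subset_image hrange
  | succ i => simp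

end Slab

def numVertices {G : Type*} [Add G] [DecidableEq G] (S : Finset (G × G)) : ℕ :=
  #(S.image Prod.fst) + #(S.image Prod.snd) + #(S.image fun xy => xy.1 + xy.2)

lemma numVertices_product_self_le {G : Type*} [Add G] [DecidableEq G] (F : Finset G) :
    numVertices (F ×ˢ F) ≤ 2 * #F + #(F + F) := by
  have hfst : #((F ×ˢ F).image Prod.fst) ≤ #F :=
    card_le_card (image_subset_iff.mpr fun _ hx => (mem_product.mp hx).1)
  have hsnd : #((F ×ˢ F).image Prod.snd) ≤ #F :=
    card_le_card (image_subset_iff.mpr fun _ hx => (mem_product.mp hx).2)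
  rw [numVertices, image_add_product]
  omega

theorem exists_numVertices_le_and_card_eq_sq {p : ℕ} (hp : 1 < p) {a : ℕ} (ha : 0 < a) :
    ∃ m, 0 < m ∧ ∃ S : Finset ((Fin m → ZMod p) × (Fin m → ZMod p)),
      numVertices S ≤ 6 * a ∧ #S = a ^ 2 := by
  have : NeZero p := ⟨by omega⟩
  obtain ⟨k, t, htp, haN, hNa⟩ := exists_pow_mul_succ_le_two_mul hp ha
  obtain ⟨F, hFA, hF⟩ := exists_subset_card_eq (s := slab p k (t + 1)) (n := a)
    (by rw [card_slab (by omega), mul_comm]; exact haN)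
  have hFF : #(F + F) ≤ (2 * t + 1) * p ^ k := by
    rw [← card_slab (k := k) htp, two_mul]
    exact card_le_card ((add_subset_add hFA hFA).trans (slab_add_slab_subset k t t))
  have hsum : (2 * t + 1) * p ^ k + p ^ k = 2 * (p ^ k * (t + 1)) := by ring
  refine ⟨k + 1, k.succ_pos, F ×ˢ F, ?_, by rw [card_product, hF, sq]⟩
  have := numVertices_product_self_le F
  omega

/-- In the addition table of `(ℤ/pℤ)^m` for suitable `m`, `v` vertices can span
at least `(1 + o(1))·v²/49` faces, uniformly in the prime `p`. -/
theorem stmt_14 :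
    ∀ δ : ℝ, 0 < δ →
    ∃ v₀ : ℕ, ∀ p : ℕ, p.Prime → ∀ v : ℕ, v₀ ≤ v →
      ∃ m : ℕ, 0 < m ∧
        ∃ S : Finset ((Fin m → ZMod p) × (Fin m → ZMod p)),
          (S.image Prod.fst).card + (S.image Prod.snd).card
            + (S.image fun xy => xy.1 + xy.2).card ≤ v ∧
          (1 - δ) * (v : ℝ) ^ 2 / 49 ≤ (S.card : ℝ) := by
  intro δ hδ
  refine ⟨35, fun p hp v hv => ?_⟩
  obtain ⟨m, hm, S, hSv, hSa⟩ :=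
    exists_numVertices_le_and_card_eq_sq hp.one_lt (a := v / 6) (by omega)
  refine ⟨m, hm, S, hSv.trans (Nat.mul_div_le v 6), ?_⟩
  have hv7 : (v : ℝ) ≤ 7 * (v / 6 : ℕ) := by exact_mod_cast (by omega : v ≤ 7 * (v / 6))
  rw [hSa, div_le_iff₀ (by norm_num), Nat.cast_pow]
  calc (1 - δ) * (v : ℝ) ^ 2 ≤ (v : ℝ) ^ 2 := mul_le_of_le_one_left (sq_nonneg _) (by linarith)
    _ ≤ (7 * (v / 6 : ℕ)) ^ 2 := pow_le_pow_left₀ (Nat.cast_nonneg _) hv7 2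
    _ = _ := by ring
end

section
/- For every real δ > 0 there exists t₀ such that for every prime p and every integer t ≥ t₀ there exist a positive integer m and a finite set S ⊆ (ℤ/pℤ)^m × (ℤ/pℤ)^m with |S| = t and |π₁(S)| + |π₂(S)| + |{x + y : (x, y) ∈ S}| ≤ (7 + δ)·√t, where π₁(S) and π₂(S) denote the images of S under the two coordinate projections. -/
/-!
Take `A = {v : v 0 ∈ {0, …, n - 1}} ⊆ (ℤ/pℤ)^(j+1)`, so that `|A| = n p^j` and
`A + A ⊆ {v : v 0 ∈ {0, …, 2n - 2}}` has at most `(2n - 1) p^j` elements. Any `t` cells of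
`A × A` span at most `2|A| + |A + A| ≤ 4 n p^j - p^j` vertices. Choosing `p^j ≤ √t < p^(j+1)` and
`n = ⌈√t / p^j⌉ ≤ p` gives `t ≤ |A|^2` and `n p^j < √t + p^j`, hence at most `4√t + 3p^j ≤ 7√t`
vertices.
-/

open Finset Fintype Pointwise

theorem Finset.card_image_fst_add_card_image_snd_add_card_image_add_le {G : Type*}
    [DecidableEq G] [Add G] {A B : Finset G} {S : Finset (G × G)} (hS : S ⊆ A ×ˢ B) :
    #(S.image Prod.fst) + #(S.image Prod.snd) + #(S.image fun xy => xy.1 + xy.2) ≤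
      #A + #B + #(A + B) := by
  gcongr
  · exact image_subset_iff.2 fun xy hxy => (mem_product.1 (hS hxy)).1
  · exact image_subset_iff.2 fun xy hxy => (mem_product.1 (hS hxy)).2
  · exact (image_subset_image hS).trans image_add_product.subset

section Cylinder

variable {α : Type*} [Fintype α]

def cylinder (j : ℕ) (T : Finset α) : Finset (Fin (j + 1) → α) :=
  piFinset (Fin.cons T fun _ => univ)

theorem card_cylinder (j : ℕ) (T : Finset α) : #(cylinder j T) = #T * card α ^ j := by
  simp [cylinder, Fin.prod_univ_succ]

theorem cylinder_add_cylinder [DecidableEq α] [AddMonoid α] (j : ℕ) (T U : Finset α) :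
    cylinder j T + cylinder j U = cylinder j (T + U) := by
  rw [cylinder, cylinder, cylinder, ← piFinset_add]
  congr 1
  funext i
  cases i using Fin.cases <;> simp

end Cylinder

section InitialSegment

variable {R : Type*} [DecidableEq R] [AddGroupWithOne R]

theorem card_image_natCast_range (p : ℕ) [CharP R p] {n : ℕ} (hn : n ≤ p) :
    #((range n).image (Nat.cast : ℕ → R)) = n := by
  rw [card_image_of_injOn ((CharP.natCast_injOn_Iio R p).mono fun k hk => ?_), Finset.card_range]
  exact (mem_range.1 hk).trans_le hn

theorem card_image_natCast_range_add_le (n : ℕ) :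
    #((range n).image (Nat.cast : ℕ → R) + (range n).image Nat.cast) ≤ 2 * n - 1 := by
  have hsum : range n + range n ⊆ range (2 * n - 1) := by
    intro k hk
    obtain ⟨a, ha, b, hb, rfl⟩ := mem_add.1 hk
    simp only [mem_range] at ha hb ⊢
    omega
  calc #((range n).image (Nat.cast : ℕ → R) + (range n).image Nat.cast)
      = #((range n + range n).image (Nat.castAddMonoidHom R)) := by
        rw [image_add]; rfl
    _ ≤ #(range n + range n) := card_image_le
    _ ≤ 2 * n - 1 := (card_le_card hsum).trans (card_range _).le

end InitialSegment

theorem exists_finset_card_eq_and_card_add_le (p j : ℕ) [NeZero p] {n : ℕ} (hn : n ≤ p) :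
    ∃ A : Finset (Fin (j + 1) → ZMod p), #A = n * p ^ j ∧ #(A + A) ≤ (2 * n - 1) * p ^ j := by
  set T := (range n).image (Nat.cast : ℕ → ZMod p)
  refine ⟨cylinder j T, ?_, ?_⟩
  · rw [card_cylinder, card_image_natCast_range p hn, ZMod.card]
  · rw [cylinder_add_cylinder, card_cylinder, ZMod.card]
    gcongr
    exact card_image_natCast_range_add_le n

theorem exists_mul_pow_near {x : ℝ} (hx : 1 ≤ x) {p : ℕ} (hp : 2 ≤ p) :
    ∃ j n : ℕ, n ≤ p ∧ x ≤ n * p ^ j ∧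
      ((2 * (n * p ^ j) + (2 * n - 1) * p ^ j : ℕ) : ℝ) ≤ 7 * x := by
  obtain ⟨j, hqx, hxq⟩ := exists_nat_pow_near hx (show (1 : ℝ) < p by exact_mod_cast hp)
  set q : ℝ := (p : ℝ) ^ j
  have hq : 0 < q := by positivity
  set n := ⌈x / q⌉₊
  have hn : 1 ≤ n := Nat.one_le_iff_ne_zero.2 (Nat.ceil_pos.2 (by positivity)).ne'
  have hxn : x ≤ n * q := (div_le_iff₀ hq).1 (Nat.le_ceil _)
  have hnx : n * q < x + q := by
    calc n * q < (x / q + 1) * q := by gcongr; exact Nat.ceil_lt_add_one (by positivity)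
      _ = x + q := by field_simp
  refine ⟨j, n, Nat.ceil_le.2 ((div_le_iff₀ hq).2 ?_), hxn, ?_⟩
  · rw [mul_comm, ← pow_succ]; exact hxq.le
  · push_cast [Nat.cast_sub (by omega : 1 ≤ 2 * n)]
    calc 2 * (n * q) + (2 * n - 1) * q = 4 * (n * q) - q := by ring
      _ ≤ 4 * (x + q) - q := by linarith
      _ ≤ 7 * x := by linarith

/-- In the addition table of `(ℤ/pℤ)^m` for suitable `m` one can find `t` cells
spanning at most `(7 + o(1))·√t` vertices, uniformly in the prime `p`. -/
theorem stmt_15 :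
    ∀ δ : ℝ, 0 < δ →
    ∃ t₀ : ℕ, ∀ p : ℕ, p.Prime → ∀ t : ℕ, t₀ ≤ t →
      ∃ m : ℕ, 0 < m ∧
        ∃ S : Finset ((Fin m → ZMod p) × (Fin m → ZMod p)),
          S.card = t ∧
          (((S.image Prod.fst).card + (S.image Prod.snd).card
            + (S.image fun xy => xy.1 + xy.2).card : ℕ) : ℝ) ≤
              (7 + δ) * Real.sqrt t := by
  intro δ hδ
  refine ⟨1, fun p hp t ht => ?_⟩
  have : NeZero p := ⟨hp.ne_zero⟩
  obtain ⟨j, n, hnp, hsqrt, hbound⟩ :=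
    exists_mul_pow_near (x := √t) (Real.one_le_sqrt.2 (by exact_mod_cast ht)) hp.two_le
  obtain ⟨A, hA, hAA⟩ := exists_finset_card_eq_and_card_add_le p j hnp
  have htA : t ≤ #(A ×ˢ A) := by
    rw [card_product, hA, ← Nat.cast_le (α := ℝ), ← Real.sqrt_le_sqrt_iff (by positivity)]
    push_cast
    rwa [Real.sqrt_mul_self (by positivity)]
  obtain ⟨S, hSA, hSt⟩ := exists_subset_card_eq htA
  refine ⟨j + 1, j.succ_pos, S, hSt, ?_⟩
  calc _ ≤ ((#A + #A + #(A + A) : ℕ) : ℝ) := by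
        exact_mod_cast card_image_fst_add_card_image_snd_add_card_image_add_le hSA
    _ ≤ ((2 * (n * p ^ j) + (2 * n - 1) * p ^ j : ℕ) : ℝ) := by
        gcongr; omega
    _ ≤ 7 * √t := hbound
    _ ≤ (7 + δ) * √t := by gcongr; linarith
end
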